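/- Let (A, ≻, ≺, Δ_{≻,r}, Δ_{≺,r}) be a factorizable anti-dendriform bialgebra. Then Im(T_r ⊕ T_{τ(r)}) = {(T_r(ζ), -T_{τ(r)}(ζ)) : ζ ∈ A*} is an anti-dendriform subalgebra of the direct sum anti-dendriform algebra A ⊕ A, isomorphic as an anti-dendriform algebra to (A*, ≻_r, ≺_r). -/

import Mathlib

open TensorProduct

set_option synthInstance.maxHeartbeats 1000000
set_option maxHeartbeats 1600000

variable {K : Type*} [Field K]

/-- The anti-dendriform algebra identities for two bilinear operations `s` (≻) and `p` (≺):
`x≻(y≻z) = -(x·y)≻z = -x≺(y·z) = (x≺y)≺z` and `(x≻y)≺z = x≻(y≺z)`, where `x·y = x≻y + x≺y`. -/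
def IsAntiDend {M : Type*} [AddCommGroup M] [Module K M]
    (s p : M →ₗ[K] M →ₗ[K] M) : Prop :=
  ∀ x y z : M,
    s x (s y z) = - s (s x y + p x y) z ∧
    s x (s y z) = - p x (s y z + p y z) ∧
    s x (s y z) = p (p x y) z ∧
    p (s x y) z = s x (p y z)

/-- The bilinear map `a ⊗ b ↦ (ζ ↦ ζ(a) • b)` used to define `T_r`. -/
noncomputable def Tbil {M : Type*} [AddCommGroup M] [Module K M] :
    M →ₗ[K] M →ₗ[K] (Module.Dual K M →ₗ[K] M) :=
  LinearMap.mk₂ K (fun a b => (Module.Dual.eval K M a).smulRight b)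
    (fun a a' b => by ext ζ; simp [add_smul])
    (fun c a b => by
      ext ζ
      simp only [LinearMap.smulRight_apply, LinearMap.smul_apply, map_smul,
        Module.Dual.eval_apply, smul_eq_mul, mul_smul])
    (fun a b b' => by ext ζ; simp)
    (fun c a b => by
      ext ζ
      simp only [LinearMap.smulRight_apply, LinearMap.smul_apply]
      exact smul_comm _ _ _)

/-- `T_r : A* → A`, `⟨T_r ζ, η⟩ = ⟨r, ζ ⊗ η⟩`; concretely `T_r ζ = Σ ζ(aᵢ) • bᵢ`
for `r = Σ aᵢ ⊗ bᵢ`. -/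
noncomputable def TmL {M : Type*} [AddCommGroup M] [Module K M] (r : M ⊗[K] M) :
    Module.Dual K M →ₗ[K] M :=
  TensorProduct.lift Tbil r

/-- The flip `τ : A ⊗ A → A ⊗ A`. -/
noncomputable def tau {M : Type*} [AddCommGroup M] [Module K M] (r : M ⊗[K] M) : M ⊗[K] M :=
  TensorProduct.comm K M M r

/-- `r` is invariant: `(R_≺(x)⊗I + I⊗L_·(x)) r = 0` and `(R_·(x)⊗I + I⊗L_≻(x)) r = 0`. -/
def Invariant {M : Type*} [AddCommGroup M] [Module K M]
    (s p : M →ₗ[K] M →ₗ[K] M) (r : M ⊗[K] M) : Prop :=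
  ∀ x : M,
    TensorProduct.map (p.flip x) (LinearMap.id : M →ₗ[K] M) r
      + TensorProduct.map (LinearMap.id : M →ₗ[K] M) ((s + p) x) r = 0 ∧
    TensorProduct.map ((s + p).flip x) (LinearMap.id : M →ₗ[K] M) r
      + TensorProduct.map (LinearMap.id : M →ₗ[K] M) (s x) r = 0

/-- `(a⊗b)⊗(c⊗d) ↦ (m a c) ⊗ b ⊗ d` : the product is placed in the first tensor slot,
giving `r₁₂ ∗ r₁₃` when applied to `r ⊗ r`. -/
noncomputable def place1 {M : Type*} [AddCommGroup M] [Module K M]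
    (m : M →ₗ[K] M →ₗ[K] M) :
    (M ⊗[K] M) ⊗[K] (M ⊗[K] M) →ₗ[K] M ⊗[K] (M ⊗[K] M) :=
  (TensorProduct.map (TensorProduct.lift m)
      (LinearMap.id : M ⊗[K] M →ₗ[K] M ⊗[K] M)) ∘ₗ
    (TensorProduct.tensorTensorTensorComm K M M M M).toLinearMap

/-- `(a⊗b)⊗(c⊗d) ↦ c ⊗ (m a d) ⊗ b` : the product in the second slot, giving `r₂₃ ∗ r₁₂`. -/
noncomputable def place2 {M : Type*} [AddCommGroup M] [Module K M]
    (m : M →ₗ[K] M →ₗ[K] M) :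
    (M ⊗[K] M) ⊗[K] (M ⊗[K] M) →ₗ[K] M ⊗[K] (M ⊗[K] M) :=
  (TensorProduct.leftComm K M M M).toLinearMap ∘ₗ
  (TensorProduct.map (LinearMap.id : M →ₗ[K] M) (TensorProduct.comm K M M).toLinearMap) ∘ₗ
  (TensorProduct.map (TensorProduct.lift m)
      (LinearMap.id : M ⊗[K] M →ₗ[K] M ⊗[K] M)) ∘ₗ
  (TensorProduct.tensorTensorTensorComm K M M M M).toLinearMap ∘ₗ
  (TensorProduct.congr (LinearEquiv.refl K (M ⊗[K] M)) (TensorProduct.comm K M M)).toLinearMap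

/-- `(a⊗b)⊗(c⊗d) ↦ a ⊗ c ⊗ (m b d)` : the product in the third slot, giving `r₁₃ ∗ r₂₃`. -/
noncomputable def place3 {M : Type*} [AddCommGroup M] [Module K M]
    (m : M →ₗ[K] M →ₗ[K] M) :
    (M ⊗[K] M) ⊗[K] (M ⊗[K] M) →ₗ[K] M ⊗[K] (M ⊗[K] M) :=
  (TensorProduct.assoc K M M M).toLinearMap ∘ₗ
  (TensorProduct.map (LinearMap.id : M ⊗[K] M →ₗ[K] M ⊗[K] M) (TensorProduct.lift m)) ∘ₗ
  (TensorProduct.tensorTensorTensorComm K M M M M).toLinearMap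

/-- `D(r) = r₁₂·r₁₃ + r₂₃≻r₁₂ - r₁₃≺r₂₃`. -/
noncomputable def adD {M : Type*} [AddCommGroup M] [Module K M]
    (s p : M →ₗ[K] M →ₗ[K] M) (r : M ⊗[K] M) : M ⊗[K] (M ⊗[K] M) :=
  place1 (s + p) (r ⊗ₜ[K] r) + place2 s (r ⊗ₜ[K] r) - place3 p (r ⊗ₜ[K] r)

/-- `D₁(r) = r₂₃·r₁₂ + r₁₃≻r₂₃ + r₁₂≺r₁₃`. -/
noncomputable def adD1 {M : Type*} [AddCommGroup M] [Module K M]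
    (s p : M →ₗ[K] M →ₗ[K] M) (r : M ⊗[K] M) : M ⊗[K] (M ⊗[K] M) :=
  place2 (s + p) (r ⊗ₜ[K] r) + place3 s (r ⊗ₜ[K] r) + place1 p (r ⊗ₜ[K] r)

/-- `D₂(r) = r₁₃·r₂₃ - r₁₂≻r₁₃ + r₂₃≺r₁₂`. -/
noncomputable def adD2 {M : Type*} [AddCommGroup M] [Module K M]
    (s p : M →ₗ[K] M →ₗ[K] M) (r : M ⊗[K] M) : M ⊗[K] (M ⊗[K] M) :=
  place3 (s + p) (r ⊗ₜ[K] r) - place1 s (r ⊗ₜ[K] r) + place2 p (r ⊗ₜ[K] r)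

/-- The anti-dendriform Yang-Baxter equation `D(r) = 0`. -/
noncomputable def AYBE {M : Type*} [AddCommGroup M] [Module K M]
    (s p : M →ₗ[K] M →ₗ[K] M) (r : M ⊗[K] M) : Prop :=
  adD s p r = 0

/-- `x ↦ R_m(x)* = (y ↦ m y x)*` on the dual space. -/
noncomputable def RstarOp {M : Type*} [AddCommGroup M] [Module K M]
    (m : M →ₗ[K] M →ₗ[K] M) :
    M →ₗ[K] (Module.Dual K M →ₗ[K] Module.Dual K M) :=
  Module.Dual.transpose ∘ₗ m.flip

/-- `x ↦ L_m(x)* = (y ↦ m x y)*` on the dual space. -/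
noncomputable def LstarOp {M : Type*} [AddCommGroup M] [Module K M]
    (m : M →ₗ[K] M →ₗ[K] M) :
    M →ₗ[K] (Module.Dual K M →ₗ[K] Module.Dual K M) :=
  Module.Dual.transpose ∘ₗ m

/-- `ζ ≻_r η = -R_·*(T_r ζ) η - L_≺*(T_{τ(r)} η) ζ`. -/
noncomputable def succR {M : Type*} [AddCommGroup M] [Module K M]
    (s p : M →ₗ[K] M →ₗ[K] M) (r : M ⊗[K] M) :
    Module.Dual K M →ₗ[K] Module.Dual K M →ₗ[K] Module.Dual K M :=
  (RstarOp (s + p) ∘ₗ (- TmL r)) + (LstarOp p ∘ₗ (- TmL (tau r))).flip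

/-- `ζ ≺_r η = R_≻*(T_r ζ) η + L_·*(T_{τ(r)} η) ζ`. -/
noncomputable def precR {M : Type*} [AddCommGroup M] [Module K M]
    (s p : M →ₗ[K] M →ₗ[K] M) (r : M ⊗[K] M) :
    Module.Dual K M →ₗ[K] Module.Dual K M →ₗ[K] Module.Dual K M :=
  (RstarOp s ∘ₗ TmL r) + (LstarOp (s + p) ∘ₗ TmL (tau r)).flip

variable {A : Type*} [AddCommGroup A] [Module K A]

/-!
Pairing the anti-dendriform Yang–Baxter equation `D(r) = 0` with `ζ ⊗ η ⊗ θ`, and the invariance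
of `r + τ(r)` with `ζ ⊗ η`, turns both into scalar identities between the values of `T_r` and
`T_{τ(r)}`. Suitable linear combinations of these identities say that `T_r` and `-T_{τ(r)}` are
homomorphisms from `(A*, ≻_r, ≺_r)` to `A`, so `F = (T_r, -T_{τ(r)}) : A* → A ⊕ A` is a
homomorphism and its image is a subalgebra. Finally `F` is injective because
`T_r - (-T_{τ(r)}) = T_{r+τ(r)}` is, so `F` is an isomorphism onto its image.
-/

@[simp] lemma TmL_tmul (a b : A) (ζ : Module.Dual K A) : TmL (a ⊗ₜ[K] b) ζ = ζ a • b := by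
  simp [TmL, Tbil]

@[simp] lemma TmL_zero : TmL (0 : A ⊗[K] A) = 0 :=
  map_zero (TensorProduct.lift Tbil)

@[simp] lemma TmL_add (w w' : A ⊗[K] A) : TmL (w + w') = TmL w + TmL w' :=
  map_add (TensorProduct.lift Tbil) w w'

@[simp] lemma tau_tmul (a b : A) : tau (a ⊗ₜ[K] b) = b ⊗ₜ[K] a := rfl

@[simp] lemma tau_zero : tau (0 : A ⊗[K] A) = 0 :=
  map_zero (TensorProduct.comm K A A)

@[simp] lemma tau_add (w w' : A ⊗[K] A) : tau (w + w') = tau w + tau w' :=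
  map_add (TensorProduct.comm K A A) w w'

@[simp] lemma tau_tau (w : A ⊗[K] A) : tau (tau w) = w :=
  (TensorProduct.comm K A A).symm_apply_apply w

lemma tau_add_tau_self (r : A ⊗[K] A) : tau (r + tau r) = r + tau r := by
  rw [tau_add, tau_tau, add_comm]

lemma apply_TmL_comm (w : A ⊗[K] A) (ζ η : Module.Dual K A) :
    η (TmL w ζ) = ζ (TmL (tau w) η) := by
  induction w using TensorProduct.induction_on with
  | zero => simp
  | tmul a b => simp [mul_comm]
  | add x y hx hy => simp [hx, hy]

lemma dualDistrib_apply_eq_apply_TmL (ζ η : Module.Dual K A) (w : A ⊗[K] A) :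
    dualDistrib K A A (ζ ⊗ₜ η) w = η (TmL w ζ) := by
  induction w using TensorProduct.induction_on with
  | zero => simp
  | tmul a b => simp
  | add x y hx hy => simp [hx, hy]

lemma dualDistrib_map (f g : A →ₗ[K] A) (ζ η : Module.Dual K A) (w : A ⊗[K] A) :
    dualDistrib K A A (ζ ⊗ₜ η) (TensorProduct.map f g w) =
      dualDistrib K A A ((ζ ∘ₗ f) ⊗ₜ (η ∘ₗ g)) w := by
  induction w using TensorProduct.induction_on with
  | zero => simp
  | tmul a b => simp
  | add x y hx hy => simp [hx, hy]

lemma eq_of_forall_dual_apply_eq {x y : A} (h : ∀ θ : Module.Dual K A, θ x = θ y) : x = y :=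
  Module.eval_apply_injective K (LinearMap.ext h)

section Placements

variable (m : A →ₗ[K] A →ₗ[K] A) (a b c d : A)

@[simp] lemma place1_tmul :
    place1 m ((a ⊗ₜ[K] b) ⊗ₜ[K] (c ⊗ₜ[K] d)) = m a c ⊗ₜ[K] (b ⊗ₜ[K] d) := rfl

@[simp] lemma place2_tmul :
    place2 m ((a ⊗ₜ[K] b) ⊗ₜ[K] (c ⊗ₜ[K] d)) = c ⊗ₜ[K] (m a d ⊗ₜ[K] b) := rfl

@[simp] lemma place3_tmul :
    place3 m ((a ⊗ₜ[K] b) ⊗ₜ[K] (c ⊗ₜ[K] d)) = a ⊗ₜ[K] (c ⊗ₜ[K] m b d) := rfl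

end Placements

noncomputable def pairing3 (ζ η θ : Module.Dual K A) : Module.Dual K (A ⊗[K] (A ⊗[K] A)) :=
  dualDistrib K A (A ⊗[K] A) (ζ ⊗ₜ dualDistrib K A A (η ⊗ₜ θ))

@[simp] lemma pairing3_tmul (ζ η θ : Module.Dual K A) (a b c : A) :
    pairing3 ζ η θ (a ⊗ₜ[K] (b ⊗ₜ[K] c)) = ζ a * (η b * θ c) := rfl

section Contractions

variable (m : A →ₗ[K] A →ₗ[K] A) (ζ η θ : Module.Dual K A) (w₁ w₂ : A ⊗[K] A)

lemma pairing3_place1 :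
    pairing3 ζ η θ (place1 m (w₁ ⊗ₜ[K] w₂)) = ζ (m (TmL (tau w₁) η) (TmL (tau w₂) θ)) := by
  induction w₁ using TensorProduct.induction_on with
  | zero => simp
  | add x y hx hy => simp [TensorProduct.add_tmul, hx, hy]
  | tmul a b =>
    induction w₂ using TensorProduct.induction_on with
    | zero => simp
    | add x y hx hy => simp [TensorProduct.tmul_add, hx, hy]
    | tmul c d =>
      simp only [place1_tmul, pairing3_tmul, tau_tmul, TmL_tmul, map_smul, LinearMap.smul_apply,
        smul_eq_mul]
      ring

lemma pairing3_place2 :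
    pairing3 ζ η θ (place2 m (w₁ ⊗ₜ[K] w₂)) = η (m (TmL (tau w₁) θ) (TmL w₂ ζ)) := by
  induction w₁ using TensorProduct.induction_on with
  | zero => simp
  | add x y hx hy => simp [TensorProduct.add_tmul, hx, hy]
  | tmul a b =>
    induction w₂ using TensorProduct.induction_on with
    | zero => simp
    | add x y hx hy => simp [TensorProduct.tmul_add, hx, hy]
    | tmul c d =>
      simp only [place2_tmul, pairing3_tmul, tau_tmul, TmL_tmul, map_smul, LinearMap.smul_apply,
        smul_eq_mul]
      ring

lemma pairing3_place3 :
    pairing3 ζ η θ (place3 m (w₁ ⊗ₜ[K] w₂)) = θ (m (TmL w₁ ζ) (TmL w₂ η)) := by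
  induction w₁ using TensorProduct.induction_on with
  | zero => simp
  | add x y hx hy => simp [TensorProduct.add_tmul, hx, hy]
  | tmul a b =>
    induction w₂ using TensorProduct.induction_on with
    | zero => simp
    | add x y hx hy => simp [TensorProduct.tmul_add, hx, hy]
    | tmul c d =>
      simp only [place3_tmul, pairing3_tmul, TmL_tmul, map_smul, LinearMap.smul_apply,
        smul_eq_mul]
      ring

end Contractions

lemma AYBE.apply_pairing {s p : A →ₗ[K] A →ₗ[K] A} {r : A ⊗[K] A} (hy : AYBE s p r)
    (ζ η θ : Module.Dual K A) :
    θ (p (TmL r ζ) (TmL r η)) = η (s (TmL (tau r) θ) (TmL r ζ)) +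
      ζ (s (TmL (tau r) η) (TmL (tau r) θ)) + ζ (p (TmL (tau r) η) (TmL (tau r) θ)) := by
  have h0 : pairing3 ζ η θ (adD s p r) = 0 := by rw [hy, map_zero]
  rw [adD, map_sub, map_add, pairing3_place1, pairing3_place2, pairing3_place3,
    LinearMap.add_apply, LinearMap.add_apply, map_add] at h0
  linear_combination -h0

lemma apply_TmL_add_apply_TmL_eq_zero {f g : A →ₗ[K] A} {w : A ⊗[K] A}
    (h : TensorProduct.map f LinearMap.id w + TensorProduct.map LinearMap.id g w = 0)
    (ζ η : Module.Dual K A) : ζ (f (TmL (tau w) η)) + η (g (TmL w ζ)) = 0 := by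
  have := congrArg (dualDistrib K A A (ζ ⊗ₜ η)) h
  rwa [map_add, map_zero, dualDistrib_map, dualDistrib_map, dualDistrib_apply_eq_apply_TmL,
    dualDistrib_apply_eq_apply_TmL, apply_TmL_comm w] at this

lemma Invariant.apply_pairing {s p : A →ₗ[K] A →ₗ[K] A} {w : A ⊗[K] A} (hinv : Invariant s p w)
    (x : A) (ζ η : Module.Dual K A) :
    ζ (p (TmL (tau w) η) x) + η (s x (TmL w ζ)) + η (p x (TmL w ζ)) = 0 ∧
      ζ (s (TmL (tau w) η) x) + ζ (p (TmL (tau w) η) x) + η (s x (TmL w ζ)) = 0 := by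
  have h₁ := apply_TmL_add_apply_TmL_eq_zero (hinv x).1 ζ η
  have h₂ := apply_TmL_add_apply_TmL_eq_zero (hinv x).2 ζ η
  simp only [LinearMap.flip_apply, LinearMap.add_apply, map_add] at h₁ h₂
  exact ⟨by linear_combination h₁, by linear_combination h₂⟩

lemma Invariant.apply_pairing_of_add_tau {s p : A →ₗ[K] A →ₗ[K] A} {r : A ⊗[K] A}
    (hinv : Invariant s p (r + tau r)) (x : A) (ζ η : Module.Dual K A) :
    ζ (p (TmL r η) x) + ζ (p (TmL (tau r) η) x) + η (s x (TmL r ζ)) + η (s x (TmL (tau r) ζ)) +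
        η (p x (TmL r ζ)) + η (p x (TmL (tau r) ζ)) = 0 ∧
      ζ (s (TmL r η) x) + ζ (s (TmL (tau r) η) x) + ζ (p (TmL r η) x) +
        ζ (p (TmL (tau r) η) x) + η (s x (TmL r ζ)) + η (s x (TmL (tau r) ζ)) = 0 := by
  have h := hinv.apply_pairing x ζ η
  rw [tau_add_tau_self] at h
  simp only [TmL_add, LinearMap.add_apply, map_add] at h
  exact ⟨by linear_combination h.1, by linear_combination h.2⟩

lemma succR_apply (s p : A →ₗ[K] A →ₗ[K] A) (r : A ⊗[K] A) (ζ η : Module.Dual K A) (x : A) :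
    succR s p r ζ η x = -η (s x (TmL r ζ)) - η (p x (TmL r ζ)) - ζ (p (TmL (tau r) η) x) := by
  simp only [succR, RstarOp, LstarOp, LinearMap.add_apply, LinearMap.coe_comp, LinearMap.coe_neg,
    Function.comp_apply, Pi.neg_apply, map_neg, LinearMap.neg_apply, Module.Dual.transpose_apply,
    LinearMap.flip_apply, map_add]
  ring

lemma precR_apply (s p : A →ₗ[K] A →ₗ[K] A) (r : A ⊗[K] A) (ζ η : Module.Dual K A) (x : A) :
    precR s p r ζ η x =
      η (s x (TmL r ζ)) + ζ (s (TmL (tau r) η) x) + ζ (p (TmL (tau r) η) x) := by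
  simp only [precR, RstarOp, LstarOp, LinearMap.add_apply, LinearMap.coe_comp, Function.comp_apply,
    Module.Dual.transpose_apply, LinearMap.flip_apply, map_add]
  ring

section Homomorphisms

variable {s p : A →ₗ[K] A →ₗ[K] A} {r : A ⊗[K] A}

lemma TmL_succR (hy : AYBE s p r) (hinv : Invariant s p (r + tau r)) (ζ η : Module.Dual K A) :
    TmL r (succR s p r ζ η) = s (TmL r ζ) (TmL r η) := by
  refine eq_of_forall_dual_apply_eq (K := K) fun θ => ?_
  rw [apply_TmL_comm, succR_apply]
  linear_combination hy.apply_pairing ζ η θ + hy.apply_pairing θ ζ η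
    - (hinv.apply_pairing_of_add_tau (TmL r ζ) η θ).1
    + (hinv.apply_pairing_of_add_tau (TmL (tau r) η) θ ζ).2

lemma neg_TmL_tau_succR (hy : AYBE s p r) (hinv : Invariant s p (r + tau r))
    (ζ η : Module.Dual K A) :
    -TmL (tau r) (succR s p r ζ η) = s (-TmL (tau r) ζ) (-TmL (tau r) η) := by
  rw [neg_eq_iff_eq_neg]
  simp only [map_neg, LinearMap.neg_apply, neg_neg]
  refine eq_of_forall_dual_apply_eq (K := K) fun θ => ?_
  rw [apply_TmL_comm, tau_tau, succR_apply, map_neg]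
  linear_combination -hy.apply_pairing ζ η θ - hy.apply_pairing θ ζ η
    + (hinv.apply_pairing_of_add_tau (TmL r ζ) η θ).1
    - (hinv.apply_pairing_of_add_tau (TmL r ζ) η θ).2
    - (hinv.apply_pairing_of_add_tau (TmL (tau r) η) θ ζ).1

lemma TmL_precR (hy : AYBE s p r) (ζ η : Module.Dual K A) :
    TmL r (precR s p r ζ η) = p (TmL r ζ) (TmL r η) := by
  refine eq_of_forall_dual_apply_eq (K := K) fun θ => ?_
  rw [apply_TmL_comm, precR_apply]
  linear_combination -hy.apply_pairing ζ η θ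

lemma neg_TmL_tau_precR (hy : AYBE s p r) (hinv : Invariant s p (r + tau r))
    (ζ η : Module.Dual K A) :
    -TmL (tau r) (precR s p r ζ η) = p (-TmL (tau r) ζ) (-TmL (tau r) η) := by
  rw [neg_eq_iff_eq_neg]
  simp only [map_neg, LinearMap.neg_apply, neg_neg]
  refine eq_of_forall_dual_apply_eq (K := K) fun θ => ?_
  rw [apply_TmL_comm, tau_tau, precR_apply, map_neg]
  linear_combination hy.apply_pairing ζ η θ
    - (hinv.apply_pairing_of_add_tau (TmL r ζ) η θ).1
    + (hinv.apply_pairing_of_add_tau (TmL r ζ) η θ).2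
    + (hinv.apply_pairing_of_add_tau (TmL (tau r) η) θ ζ).1

end Homomorphisms

lemma injective_prod_TmL_neg_TmL_tau {r : A ⊗[K] A} (h : Function.Injective (TmL (r + tau r))) :
    Function.Injective ((TmL r).prod (-TmL (tau r))) := by
  intro ζ η hζη
  have h₁ : TmL r ζ = TmL r η := congrArg Prod.fst hζη
  have h₂ : TmL (tau r) ζ = TmL (tau r) η := neg_inj.mp (congrArg Prod.snd hζη)
  apply h
  rw [TmL_add, LinearMap.add_apply, LinearMap.add_apply, h₁, h₂]

theorem stmt13_general
    (s p : A →ₗ[K] A →ₗ[K] A) (r : A ⊗[K] A)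
    (hy : AYBE s p r) (hinv : Invariant s p (r + tau r))
    (hbij : Function.Bijective (TmL (r + tau r))) :
    (∀ q₁ q₂ : A × A,
        q₁ ∈ LinearMap.range ((TmL r).prod (- TmL (tau r))) →
        q₂ ∈ LinearMap.range ((TmL r).prod (- TmL (tau r))) →
        (s q₁.1 q₂.1, s q₁.2 q₂.2) ∈ LinearMap.range ((TmL r).prod (- TmL (tau r))) ∧
        (p q₁.1 q₂.1, p q₁.2 q₂.2) ∈ LinearMap.range ((TmL r).prod (- TmL (tau r)))) ∧
    ∃ φ : Module.Dual K A ≃ₗ[K] ↥(LinearMap.range ((TmL r).prod (- TmL (tau r)))),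
      (∀ ζ η : Module.Dual K A,
        (φ (succR s p r ζ η)).val =
          (s (φ ζ).val.1 (φ η).val.1, s (φ ζ).val.2 (φ η).val.2)) ∧
      (∀ ζ η : Module.Dual K A,
        (φ (precR s p r ζ η)).val =
          (p (φ ζ).val.1 (φ η).val.1, p (φ ζ).val.2 (φ η).val.2)) := by
  set F := (TmL r).prod (-TmL (tau r))
  have hF_succR : ∀ ζ η, F (succR s p r ζ η) = (s (F ζ).1 (F η).1, s (F ζ).2 (F η).2) :=
    fun ζ η => Prod.ext (TmL_succR hy hinv ζ η) (neg_TmL_tau_succR hy hinv ζ η)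
  have hF_precR : ∀ ζ η, F (precR s p r ζ η) = (p (F ζ).1 (F η).1, p (F ζ).2 (F η).2) :=
    fun ζ η => Prod.ext (TmL_precR hy ζ η) (neg_TmL_tau_precR hy hinv ζ η)
  refine ⟨?_, LinearEquiv.ofInjective F (injective_prod_TmL_neg_TmL_tau hbij.injective),
    hF_succR, hF_precR⟩
  rintro _ _ ⟨ζ, rfl⟩ ⟨η, rfl⟩
  exact ⟨⟨_, hF_succR ζ η⟩, ⟨_, hF_precR ζ η⟩⟩

/-- for a factorizable anti-dendriform bialgebra,
`Im(T_r ⊕ T_{τ(r)})` is an anti-dendriform subalgebra of the direct sum `A ⊕ A`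
(with componentwise operations), isomorphic to `(A*, ≻_r, ≺_r)`. -/
theorem stmt13 [FiniteDimensional K A]
    (s p : A →ₗ[K] A →ₗ[K] A) (h : IsAntiDend s p) (r : A ⊗[K] A)
    (hy : AYBE s p r) (hinv : Invariant s p (r + tau r))
    (hbij : Function.Bijective (TmL (r + tau r))) :
    (∀ q₁ q₂ : A × A,
        q₁ ∈ LinearMap.range ((TmL r).prod (- TmL (tau r))) →
        q₂ ∈ LinearMap.range ((TmL r).prod (- TmL (tau r))) →
        (s q₁.1 q₂.1, s q₁.2 q₂.2) ∈ LinearMap.range ((TmL r).prod (- TmL (tau r))) ∧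
        (p q₁.1 q₂.1, p q₁.2 q₂.2) ∈ LinearMap.range ((TmL r).prod (- TmL (tau r)))) ∧
    ∃ φ : Module.Dual K A ≃ₗ[K] ↥(LinearMap.range ((TmL r).prod (- TmL (tau r)))),
      (∀ ζ η : Module.Dual K A,
        (φ (succR s p r ζ η)).val =
          (s (φ ζ).val.1 (φ η).val.1, s (φ ζ).val.2 (φ η).val.2)) ∧
      (∀ ζ η : Module.Dual K A,
        (φ (precR s p r ζ η)).val =
          (p (φ ζ).val.1 (φ η).val.1, p (φ ζ).val.2 (φ η).val.2)) :=
  stmt13_general s p r hy hinv hbij
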